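/- Let (G, w) be a connected edge-weighted simple graph on vertices enumerated v_1, …, v_n. Then there exists a ℤ-module basis M_1, …, M_n of the spline module S_G such that M_1 is the constant function 1, and for each 2 ≤ i ≤ n: M_i(v_j) = 0 for all 1 ≤ j ≤ i − 1 and M_i(v_i) = L_i, where L_i = lcm_{1 ≤ j ≤ i−1} D(v_i, v_j) and D(v_i, v_j) is the lcm over all paths p from v_i to v_j of the gcd of the weights of the edges of p. In particular S_G is a free ℤ-module of rank n. -/

import Mathlib

/-!
For a set `S` of vertices and `i ∉ S`, the values `g i` of the splines `g` vanishing on `S` form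
an ideal of `ℤ`. It lies in `(L)`, `L = lcm_{j ∈ S} D(i, j)`, because along a path from `i` to
`j ∈ S` the gcd of the weights divides `g i - g j = g i`. It is all of `(L)` because for every
prime `p` some such spline has `p`-adic valuation at most `v_p(L)` at `i`: let `c u` be the
largest, over paths from `u` into `S`, of the least `p`-adic valuation of an edge weight on the
path, capped at a bound `T` exceeding all of them (so `c = T` on `S`); then
`g u = C * (p ^ c u - p ^ T)`, with `C` the prime-to-`p` part of the product of all weights, is a
spline, and `v_p(g i) = c i ≤ v_p(L)`.

Taking `S = {v_1, …, v_{i-1}}` yields splines `M_i` forming an upper triangular matrix with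
diagonal `L_i ≠ 0`, and since every spline vanishing below `v_i` takes a multiple of `L_i` at `v_i`,
subtracting multiples of the `M_i` one at a time writes any spline in terms of them.
-/

/-- An integer spline on the edge-weighted graph `(G, w)`: a vertex labeling `g : V → ℤ` such
that for every edge `{u, x}` of `G`, the weight `w {u, x}` divides `g u - g x` in `ℤ`. -/
def IsSpline {V : Type*} (G : SimpleGraph V) (w : Sym2 V → ℕ) (g : V → ℤ) : Prop :=
  ∀ u x : V, G.Adj u x → (w s(u, x) : ℤ) ∣ g u - g x

/-- The ℤ-module of integer splines on `(G, w)`, as a submodule of `V → ℤ`. -/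
def splineSubmodule {V : Type*} (G : SimpleGraph V) (w : Sym2 V → ℕ) :
    Submodule ℤ (V → ℤ) where
  carrier := {g | IsSpline G w g}
  add_mem' := by
    intro a b ha hb u x hux
    simpa [sub_add_sub_comm] using dvd_add (ha u x hux) (hb u x hux)
  zero_mem' := by intro u x hux; simp
  smul_mem' := by
    intro c g hg u x hux
    simpa [mul_sub] using (hg u x hux).mul_left c


/-- `D_G(u, x)`: the lcm, over all paths `p` from `u` to `x` in `G`, of the gcd of the weights
of the edges of `p` (the lcm of the empty set is `1`). -/
noncomputable def pathLcm {V : Type*} [Fintype V] [DecidableEq V] (G : SimpleGraph V)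
    [DecidableRel G.Adj] (w : Sym2 V → ℕ) (u x : V) : ℕ :=
  Finset.univ.lcm (fun p : G.Path u x => (p.1.edges.map w).foldr Nat.gcd 0)

open Finset Submodule

theorem pow_dvd_pow_sub_pow_of_min_le {R : Type*} [CommRing R] (x : R) {v a b : ℕ}
    (hab : min v a ≤ b) (hba : min v b ≤ a) : x ^ v ∣ x ^ a - x ^ b := by
  by_cases h : v ≤ a ∧ v ≤ b
  · exact dvd_sub (pow_dvd_pow x h.1) (pow_dvd_pow x h.2)
  · obtain rfl : a = b := by omega
    rw [sub_self]
    exact dvd_zero _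

theorem Int.not_pow_succ_dvd_mul_pow_sub_pow {p : ℕ} (hp : p.Prime) {C : ℤ} (hC : ¬(p : ℤ) ∣ C)
    {c T : ℕ} (hcT : c < T) : ¬(p : ℤ) ^ (c + 1) ∣ C * ((p : ℤ) ^ c - (p : ℤ) ^ T) := by
  have hp' : Prime (p : ℤ) := Nat.prime_iff_prime_int.mp hp
  obtain ⟨k, rfl⟩ : ∃ k, T = c + 1 + k := ⟨T - (c + 1), by omega⟩
  rw [show C * ((p : ℤ) ^ c - (p : ℤ) ^ (c + 1 + k)) = (p : ℤ) ^ c * (C * (1 - p * p ^ k)) by ring,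
    pow_succ, mul_dvd_mul_iff_left (pow_ne_zero _ hp'.ne_zero)]
  rintro (h : (p : ℤ) ∣ C * (1 - p * p ^ k))
  rcases hp'.dvd_mul.mp h with hCp | h1
  · exact hC hCp
  · exact hp'.not_dvd_one (by simpa using dvd_add h1 (dvd_mul_right (p : ℤ) (p ^ k)))

theorem Int.natCast_mem_of_forall_prime {I : Ideal ℤ} {L : ℕ} (hI : ∀ a ∈ I, (L : ℤ) ∣ a)
    (hp : ∀ p : ℕ, p.Prime → ∃ a ∈ I, ¬(p : ℤ) ^ (L.factorization p + 1) ∣ a) :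
    (L : ℤ) ∈ I := by
  obtain ⟨m, hm⟩ := hI _ (IsPrincipal.generator_mem I)
  have hunit : IsUnit m := by
    rw [Int.isUnit_iff_natAbs_eq]
    by_contra hm1
    obtain ⟨p, hpp, hpm⟩ := Nat.exists_prime_and_dvd hm1
    obtain ⟨a, haI, ha⟩ := hp p hpp
    refine ha (dvd_trans ?_ ((IsPrincipal.mem_iff_generator_dvd I).mp haI))
    rw [hm, pow_succ]
    exact mul_dvd_mul (mod_cast Nat.ordProj_dvd L p) (Int.natCast_dvd.mpr hpm)
  rw [IsPrincipal.mem_iff_generator_dvd, hm, hunit.mul_right_dvd]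

theorem Nat.dvd_foldr_gcd_iff {d : ℕ} {l : List ℕ} : d ∣ l.foldr Nat.gcd 0 ↔ ∀ a ∈ l, d ∣ a := by
  induction l with
  | nil => simp
  | cons a l ih => simp [Nat.dvd_gcd_iff, ih]

theorem List.le_foldr_min_iff {b T : ℕ} {l : List ℕ} :
    b ≤ l.foldr min T ↔ b ≤ T ∧ ∀ a ∈ l, b ≤ a := by
  induction l with
  | nil => simp
  | cons a l ih => simp [ih, and_left_comm]

section TriangularBasis

variable {R : Type*} [CommRing R] {n : ℕ} {N : Submodule R (Fin n → R)} {M : Fin n → Fin n → R}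

theorem mem_span_of_isUpperTriangular (hM : ∀ i, M i ∈ N) (hzero : ∀ i j, j < i → M i j = 0)
    (hdvd : ∀ i, ∀ g ∈ N, (∀ j < i, g j = 0) → M i i ∣ g i) (g : N) :
    g ∈ span R (Set.range fun i => (⟨M i, hM i⟩ : N)) := by
  suffices h : ∀ k : Fin (n + 1), ∀ g : N, (∀ j : Fin n, j.castSucc < k → (g : Fin n → R) j = 0) →
      g ∈ span R (Set.range fun i => (⟨M i, hM i⟩ : N)) from
    h 0 g fun j hj => absurd hj (Fin.not_lt_zero _)
  intro k
  induction k using Fin.reverseInduction with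
  | last =>
    intro g hg
    rw [show g = 0 from Subtype.ext (funext fun j => hg j (Fin.castSucc_lt_last j))]
    exact zero_mem _
  | cast i ih =>
    intro g hg
    obtain ⟨c, hc⟩ := hdvd i g g.2 fun j hj => hg j (Fin.castSucc_lt_castSucc_iff.mpr hj)
    have hsub : g - c • ⟨M i, hM i⟩ ∈ span R (Set.range fun i => (⟨M i, hM i⟩ : N)) := by
      refine ih _ fun j hj => ?_
      rcases (Fin.castSucc_lt_succ_iff.mp hj).lt_or_eq with hj | rfl
      · simp [hg j (Fin.castSucc_lt_castSucc_iff.mpr hj), hzero i j hj]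
      · simp [hc, mul_comm]
    simpa using add_mem hsub (smul_mem _ c (subset_span (Set.mem_range_self i)))

theorem exists_basis_of_isUpperTriangular [IsDomain R] (hM : ∀ i, M i ∈ N)
    (hzero : ∀ i j, j < i → M i j = 0) (hdiag : ∀ i, M i i ≠ 0)
    (hdvd : ∀ i, ∀ g ∈ N, (∀ j < i, g j = 0) → M i i ∣ g i) :
    ∃ b : Module.Basis (Fin n) R N, ∀ i, (b i : Fin n → R) = M i := by
  have hdet : (Matrix.of M).det ≠ 0 := by
    rw [Matrix.det_of_isUpperTriangular (M := .of M) fun i j hij => hzero i j hij]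
    exact prod_ne_zero_iff.mpr fun i _ => hdiag i
  have hli : LinearIndependent R fun i => (⟨M i, hM i⟩ : N) :=
    .of_comp N.subtype (Matrix.linearIndependent_rows_of_det_ne_zero hdet)
  exact ⟨.mk hli fun g _ => mem_span_of_isUpperTriangular hM hzero hdvd g, fun i => by simp⟩

end TriangularBasis

section Splines

variable {V : Type*} {G : SimpleGraph V} {w : Sym2 V → ℕ} {g : V → ℤ}

theorem one_mem_splineSubmodule : (1 : V → ℤ) ∈ splineSubmodule G w :=
  fun _ _ _ => by simp

theorem IsSpline.walkGcd_dvd_sub (hg : IsSpline G w g) {u x : V} (q : G.Walk u x) :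
    (((q.edges.map w).foldr Nat.gcd 0 : ℕ) : ℤ) ∣ g u - g x := by
  induction q with
  | nil => simp
  | cons h q ih =>
    rw [← sub_add_sub_cancel _ (g _)]
    simp only [SimpleGraph.Walk.edges_cons, List.map_cons, List.foldr_cons]
    exact dvd_add ((Int.natCast_dvd_natCast.mpr (Nat.gcd_dvd_left _ _)).trans (hg _ _ h))
      ((Int.natCast_dvd_natCast.mpr (Nat.gcd_dvd_right _ _)).trans ih)

variable [Fintype V] [DecidableEq V] [DecidableRel G.Adj]

theorem IsSpline.pathLcm_dvd_sub (hg : IsSpline G w g) (u x : V) :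
    ((pathLcm G w u x : ℕ) : ℤ) ∣ g u - g x :=
  Int.natCast_dvd.mpr <| Finset.lcm_dvd fun q _ => Int.natCast_dvd.mp (hg.walkGcd_dvd_sub q.1)

theorem IsSpline.lcm_pathLcm_dvd (hg : IsSpline G w g) {S : Finset V} {i : V}
    (hS : ∀ j ∈ S, g j = 0) : ((S.lcm (pathLcm G w i) : ℕ) : ℤ) ∣ g i :=
  Int.natCast_dvd.mpr <| Finset.lcm_dvd fun j hj =>
    Int.natCast_dvd.mp (by simpa [hS j hj] using hg.pathLcm_dvd_sub i j)

theorem pathLcm_ne_zero (hw : ∀ e ∈ G.edgeSet, 0 < w e) {u x : V} (hux : u ≠ x) :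
    pathLcm G w u x ≠ 0 := by
  rw [pathLcm, Ne, Finset.lcm_eq_zero_iff]
  rintro ⟨q, -, hq⟩
  obtain ⟨e, he⟩ := List.exists_mem_of_ne_nil q.1.edges
    (by simpa [SimpleGraph.Walk.edges_eq_nil] using SimpleGraph.Walk.not_nil_of_ne hux)
  have h0 : 0 ∣ w e := Nat.dvd_foldr_gcd_iff.mp (by simp [hq]) _ (List.mem_map_of_mem he)
  exact (hw e (q.1.edges_subset_edgeSet he)).ne' (Nat.eq_zero_of_zero_dvd h0)

theorem lcm_pathLcm_ne_zero (hw : ∀ e ∈ G.edgeSet, 0 < w e) {S : Finset V} {i : V}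
    (hi : i ∉ S) : S.lcm (pathLcm G w i) ≠ 0 := by
  rw [Ne, Finset.lcm_eq_zero_iff]
  rintro ⟨j, hj, h0⟩
  exact pathLcm_ne_zero hw (ne_of_mem_of_not_mem hj hi).symm h0

end Splines

section Bottleneck

variable {V : Type*} {G : SimpleGraph V} (w : Sym2 V → ℕ) (p : ℕ)

def bottleneck (T : ℕ) {u x : V} (q : G.Walk u x) : ℕ :=
  (q.edges.map fun e => (w e).factorization p).foldr min T

variable {w p} {T : ℕ}

theorem le_bottleneck_iff {b : ℕ} {u x : V} {q : G.Walk u x} :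
    b ≤ bottleneck w p T q ↔ b ≤ T ∧ ∀ e ∈ q.edges, b ≤ (w e).factorization p := by
  simp [bottleneck, List.le_foldr_min_iff]

theorem bottleneck_le_cap {u x : V} (q : G.Walk u x) : bottleneck w p T q ≤ T :=
  (le_bottleneck_iff.mp le_rfl).1

theorem bottleneck_le_factorization {u x : V} {q : G.Walk u x} {e : Sym2 V} (he : e ∈ q.edges) :
    bottleneck w p T q ≤ (w e).factorization p :=
  (le_bottleneck_iff.mp le_rfl).2 e he

theorem min_bottleneck_le_bottleneck_bypass [DecidableEq V] {u x y : V} (h : G.Adj u x)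
    (q : G.Walk x y) :
    min ((w s(u, x)).factorization p) (bottleneck w p T q) ≤
      bottleneck w p T (SimpleGraph.Walk.cons h q).bypass := by
  refine le_bottleneck_iff.mpr ⟨(min_le_right _ _).trans (bottleneck_le_cap q), fun e he => ?_⟩
  rcases List.mem_cons.mp (SimpleGraph.Walk.edges_bypass_subset_edges _ he) with rfl | he
  · exact min_le_left _ _
  · exact (min_le_right _ _).trans (bottleneck_le_factorization he)

end Bottleneck

section ReachValuation

variable {V : Type*} [Fintype V] (G : SimpleGraph V) [DecidableRel G.Adj] (w : Sym2 V → ℕ)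
  (p : ℕ)

noncomputable def valuationCap : ℕ := (G.edgeFinset.sup fun e => (w e).factorization p) + 1

variable {G}

theorem factorization_lt_valuationCap {e : Sym2 V} (he : e ∈ G.edgeSet) :
    (w e).factorization p < valuationCap G w p :=
  Nat.lt_succ_of_le (Finset.le_sup (f := fun e => (w e).factorization p)
    (SimpleGraph.mem_edgeFinset.mpr he))

variable (G) [DecidableEq V]

noncomputable def reachValuation (S : Finset V) (u : V) : ℕ :=
  S.sup fun j => (Finset.univ : Finset (G.Path u j)).sup fun q =>
    bottleneck w p (valuationCap G w p) q.1

variable {G w p} {S : Finset V}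

theorem bottleneck_le_reachValuation {u j : V} (hj : j ∈ S) (q : G.Path u j) :
    bottleneck w p (valuationCap G w p) q.1 ≤ reachValuation G w p S u :=
  Finset.le_sup_of_le hj (Finset.le_sup (f := fun q : G.Path u j => bottleneck w p _ q.1)
    (Finset.mem_univ q))

theorem reachValuation_of_mem {j : V} (hj : j ∈ S) :
    reachValuation G w p S j = valuationCap G w p :=
  le_antisymm (Finset.sup_le fun _ _ => Finset.sup_le fun q _ => bottleneck_le_cap q.1)
    (by simpa [bottleneck] using bottleneck_le_reachValuation hj SimpleGraph.Path.nil)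

theorem min_le_reachValuation {u x : V} (h : G.Adj u x) :
    min ((w s(u, x)).factorization p) (reachValuation G w p S x) ≤ reachValuation G w p S u := by
  simp only [reachValuation, Finset.sup_inf_distrib_left]
  exact Finset.sup_le fun j hj => Finset.sup_le fun q _ =>
    (min_bottleneck_le_bottleneck_bypass h q.1).trans
      (bottleneck_le_reachValuation hj ⟨_, (SimpleGraph.Walk.cons h q.1).bypass_isPath⟩)

theorem reachValuation_lt_valuationCap {i : V} (hi : i ∉ S) :
    reachValuation G w p S i < valuationCap G w p := by
  refine (Finset.sup_lt_iff (Nat.succ_pos _)).mpr fun j hj =>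
    (Finset.sup_lt_iff (Nat.succ_pos _)).mpr fun q _ => ?_
  obtain ⟨e, he⟩ := List.exists_mem_of_ne_nil q.1.edges (by
    simpa [SimpleGraph.Walk.edges_eq_nil] using
      SimpleGraph.Walk.not_nil_of_ne (ne_of_mem_of_not_mem hj hi).symm)
  exact (bottleneck_le_factorization he).trans_lt
    (factorization_lt_valuationCap w p (q.1.edges_subset_edgeSet he))

theorem reachValuation_le_factorization_lcm (hw : ∀ e ∈ G.edgeSet, 0 < w e) (hp : p.Prime)
    {i : V} (hi : i ∉ S) :
    reachValuation G w p S i ≤ (S.lcm (pathLcm G w i)).factorization p := by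
  refine Finset.sup_le fun j hj => Finset.sup_le fun q _ => ?_
  rw [← hp.pow_dvd_iff_le_factorization (lcm_pathLcm_ne_zero hw hi)]
  refine dvd_trans ?_ ((Finset.dvd_lcm (Finset.mem_univ q)).trans (Finset.dvd_lcm hj))
  refine Nat.dvd_foldr_gcd_iff.mpr fun a ha => ?_
  obtain ⟨e, he, rfl⟩ := List.mem_map.mp ha
  exact (pow_dvd_pow p (bottleneck_le_factorization he)).trans (Nat.ordProj_dvd _ _)

end ReachValuation

section Flowup

variable {V : Type*} [Fintype V] [DecidableEq V] {G : SimpleGraph V} [DecidableRel G.Adj]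
  {w : Sym2 V → ℕ} {S : Finset V} {i : V}

theorem isSpline_mul_pow_reachValuation_sub (p : ℕ) {C : ℤ}
    (hC : ∀ e ∈ G.edgeSet, ((ordCompl[p] (w e) : ℕ) : ℤ) ∣ C) :
    IsSpline G w fun u => C * ((p : ℤ) ^ reachValuation G w p S u - p ^ valuationCap G w p) := by
  intro u x h
  have hux := min_le_reachValuation (w := w) (p := p) (S := S) h
  have hxu := min_le_reachValuation (w := w) (p := p) (S := S) h.symm
  rw [Sym2.eq_swap] at hxu
  rw [← Nat.ordProj_mul_ordCompl_eq_self (w s(u, x)) p, Nat.cast_mul, Nat.cast_pow, mul_comm,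
    ← mul_sub, sub_sub_sub_cancel_right]
  exact mul_dvd_mul (hC _ h) (pow_dvd_pow_sub_pow_of_min_le _ hxu hux)

theorem exists_spline_not_pow_dvd (hw : ∀ e ∈ G.edgeSet, 0 < w e) {p : ℕ} (hp : p.Prime)
    (hi : i ∉ S) :
    ∃ g ∈ splineSubmodule G w, (∀ j ∈ S, g j = 0) ∧
      ¬(p : ℤ) ^ ((S.lcm (pathLcm G w i)).factorization p + 1) ∣ g i := by
  have hW : ∏ e ∈ G.edgeFinset, w e ≠ 0 :=
    Finset.prod_ne_zero_iff.mpr fun e he => (hw e (SimpleGraph.mem_edgeFinset.mp he)).ne'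
  refine ⟨_, isSpline_mul_pow_reachValuation_sub (S := S) p fun e he =>
      Int.natCast_dvd_natCast.mpr (Nat.ordCompl_dvd_ordCompl_of_dvd
        (Finset.dvd_prod_of_mem w (SimpleGraph.mem_edgeFinset.mpr he)) p),
    fun j hj => by simp [reachValuation_of_mem hj], fun hdvd => ?_⟩
  refine Int.not_pow_succ_dvd_mul_pow_sub_pow hp (mod_cast Nat.not_dvd_ordCompl hp hW)
    (reachValuation_lt_valuationCap hi) ((pow_dvd_pow _ ?_).trans hdvd)
  exact Nat.succ_le_succ (reachValuation_le_factorization_lcm hw hp hi)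

theorem exists_spline_eq_lcm_pathLcm (hw : ∀ e ∈ G.edgeSet, 0 < w e) (hi : i ∉ S) :
    ∃ g ∈ splineSubmodule G w, (∀ j ∈ S, g j = 0) ∧ g i = S.lcm (pathLcm G w i) := by
  let K : Submodule ℤ (V → ℤ) := splineSubmodule G w ⊓ ⨅ j ∈ S, LinearMap.ker (LinearMap.proj j)
  have hK : ∀ g, g ∈ K ↔ g ∈ splineSubmodule G w ∧ ∀ j ∈ S, g j = 0 := by simp [K]
  have hL : ((S.lcm (pathLcm G w i) : ℕ) : ℤ) ∈ K.map (LinearMap.proj i) := by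
    refine Int.natCast_mem_of_forall_prime ?_ fun p hp => ?_
    · rintro _ ⟨g, hg, rfl⟩
      exact IsSpline.lcm_pathLcm_dvd ((hK g).mp hg).1 ((hK g).mp hg).2
    · obtain ⟨g, hg, hgS, hgi⟩ := exists_spline_not_pow_dvd hw hp hi
      exact ⟨g i, ⟨g, (hK g).mpr ⟨hg, hgS⟩, rfl⟩, hgi⟩
  obtain ⟨g, hg, hgi⟩ := hL
  exact ⟨g, ((hK g).mp hg).1, ((hK g).mp hg).2, hgi⟩

end Flowup

/-- A connected edge-weighted graph `(G, w)` on vertices `v_1, …, v_n` (enumerated as `Fin n`)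
has a ℤ-module basis `M_1, …, M_n` of the spline module `S_G` with `M_1` the constant function
`1`, and, for `2 ≤ i ≤ n`, `M_i v_j = 0` for `j < i` and `M_i v_i = L_i`, where
`L_i = lcm_{1 ≤ j ≤ i-1} D(v_i, v_j)`.  In particular `S_G` is free of rank `n`. -/
theorem flowup_basis_exists (n : ℕ) (hn : 1 ≤ n) (G : SimpleGraph (Fin n))
    [DecidableRel G.Adj] (w : Sym2 (Fin n) → ℕ)
    (hw : ∀ e ∈ G.edgeSet, 0 < w e) :
    ∃ b : Module.Basis (Fin n) ℤ (splineSubmodule G w),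
      ((b ⟨0, by omega⟩ : Fin n → ℤ) = fun _ => 1) ∧
      ∀ i : Fin n, 0 < (i : ℕ) →
        (∀ j : Fin n, j < i → (b i : Fin n → ℤ) j = 0) ∧
        (b i : Fin n → ℤ) i =
          ((Finset.univ.filter (fun j : Fin n => j < i)).lcm (fun j => pathLcm G w i j) : ℕ) := by
  have hflowup : ∀ i : Fin n, ∃ g ∈ splineSubmodule G w, (∀ j < i, g j = 0) ∧
      g i = ((univ.filter (· < i)).lcm (pathLcm G w i) : ℕ) ∧ ((i : ℕ) = 0 → g = 1) := by
    intro i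
    by_cases hi : (i : ℕ) = 0
    · have hS : univ.filter (· < i) = ∅ := by
        ext j
        simp [Fin.lt_def, hi]
      exact ⟨1, one_mem_splineSubmodule, fun j hj => by simp [Fin.lt_def, hi] at hj,
        by simp [hS], fun _ => rfl⟩
    · obtain ⟨g, hg, hgS, hgi⟩ :=
        exists_spline_eq_lcm_pathLcm hw (S := univ.filter (· < i)) (i := i) (by simp)
      exact ⟨g, hg, fun j hj => hgS j (by simpa using hj), hgi, fun h => absurd h hi⟩
  choose M hM hzero hdiag hone using hflowup
  obtain ⟨b, hb⟩ := exists_basis_of_isUpperTriangular hM hzero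
    (fun i => by simpa [hdiag] using lcm_pathLcm_ne_zero hw (S := univ.filter (· < i)) (by simp))
    fun i g hg hgi => hdiag i ▸ IsSpline.lcm_pathLcm_dvd hg fun j hj => hgi j (by simpa using hj)
  refine ⟨b, by rw [hb, hone _ rfl]; rfl, fun i _ => ⟨fun j hj => ?_, ?_⟩⟩
  · rw [hb, hzero i j hj]
  · rw [hb, hdiag]
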